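/- Let X be a Banach lattice and let x, y ∈ X satisfy x ≥ 0, y ≥ 0, x ≠ 0 and x ⊓ y = 0. Then there exists a positive continuous linear functional x* on X with ‖x*‖ = 1 such that x*(x) = ‖x‖ and x*(y) = 0. -/

import Mathlib

/-!
Consider the sublinear functional `q z = inf_t ‖(z + t • y)⁺‖`. It is dominated by `z ↦ ‖z⁺‖`,
vanishes at `y`, and is at least `‖x‖` at `x` because `x` is disjoint from every positive
multiple of `y`, so that `(x - s • y)⁺ = x` for `s ≥ 0`. A Hahn–Banach extension of
`c • x ↦ c * ‖x‖` dominated by `q` is then the required functional: `g z ≤ ‖z⁺‖` forces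
positivity and `‖g‖ ≤ 1`.
-/

section LatticeOrderedVectorSpace

variable {X : Type*} [Lattice X] [AddCommGroup X]

theorem posPart_sub_eq_self_of_inf_eq_zero [IsOrderedAddMonoid X] {x v : X} (hxv : x ⊓ v = 0) :
    (x - v)⁺ = x :=
  (sub_eq_zero.mp ((inf_eq_sub_posPart_sub x v).symm.trans hxv)).symm

variable [Module ℝ X] [PosSMulMono ℝ X]

theorem smul_inf_of_pos {c : ℝ} (hc : 0 < c) (a b : X) : c • (a ⊓ b) = c • a ⊓ c • b :=
  (OrderIso.smulRight hc).map_inf a b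

theorem posPart_smul_of_nonneg {c : ℝ} (hc : 0 ≤ c) (a : X) : (c • a)⁺ = c • a⁺ := by
  rcases hc.eq_or_lt with rfl | hc
  · simp
  · simpa only [posPart_def, OrderIso.smulRight_apply, smul_zero] using
      ((OrderIso.smulRight hc).map_sup a 0).symm

variable [IsOrderedAddMonoid X]

theorem inf_smul_eq_zero {x y : X} (hx : 0 ≤ x) (hy : 0 ≤ y) (hxy : x ⊓ y = 0) {t : ℝ}
    (ht : 0 ≤ t) : x ⊓ t • y = 0 := by
  have hs : 0 < max t 1 := lt_max_of_lt_right one_pos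
  refine le_antisymm ?_ (le_inf hx (smul_nonneg ht hy))
  calc x ⊓ t • y ≤ max t 1 • x ⊓ max t 1 • y :=
        inf_le_inf (by simpa using smul_le_smul_of_nonneg_right (le_max_right t 1) hx)
          (smul_le_smul_of_nonneg_right (le_max_left t 1) hy)
    _ = 0 := by rw [← smul_inf_of_pos hs, hxy, smul_zero]

theorem le_posPart_add_smul {x y : X} (hx : 0 ≤ x) (hy : 0 ≤ y) (hxy : x ⊓ y = 0) (t : ℝ) :
    x ≤ (x + t • y)⁺ := by
  rcases le_or_gt 0 t with ht | ht
  · exact (le_add_of_nonneg_right (smul_nonneg ht hy)).trans (le_posPart _)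
  · rw [← sub_neg_eq_add, ← neg_smul,
      posPart_sub_eq_self_of_inf_eq_zero (inf_smul_eq_zero hx hy hxy (neg_nonneg.mpr ht.le))]

end LatticeOrderedVectorSpace

section NormedLattice

variable {X : Type*} [NormedAddCommGroup X] [Lattice X] [IsOrderedAddMonoid X]

theorem norm_le_norm_of_nonneg_of_le [HasSolidNorm X] {a b : X} (ha : 0 ≤ a) (hab : a ≤ b) :
    ‖a‖ ≤ ‖b‖ :=
  norm_le_norm_of_abs_le_abs <| by
    rwa [abs_of_nonneg ha, abs_of_nonneg (ha.trans hab)]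

theorem norm_posPart_le [HasSolidNorm X] (a : X) : ‖a⁺‖ ≤ ‖a‖ :=
  norm_le_norm_of_abs_le_abs <| by
    rw [abs_of_nonneg (posPart_nonneg a), posPart_def]
    exact sup_le (le_abs_self a) (abs_nonneg a)

variable [NormedSpace ℝ X]

theorem LinearMap.nonneg_of_le_norm_posPart {g : X →ₗ[ℝ] ℝ} (hg : ∀ z, g z ≤ ‖z⁺‖) {z : X}
    (hz : 0 ≤ z) : 0 ≤ g z := by
  have := hg (-z)
  rw [posPart_eq_zero.mpr (neg_nonpos.mpr hz), norm_zero, map_neg] at this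
  linarith

theorem LinearMap.norm_apply_le_of_le_norm_posPart [HasSolidNorm X] {g : X →ₗ[ℝ] ℝ}
    (hg : ∀ z, g z ≤ ‖z⁺‖) (z : X) : ‖g z‖ ≤ 1 * ‖z‖ := by
  have hle (w : X) : g w ≤ ‖w‖ := (hg w).trans (norm_posPart_le w)
  rw [one_mul, Real.norm_eq_abs, abs_le]
  refine ⟨?_, hle z⟩
  linarith [map_neg g z, norm_neg z, hle (-z)]

end NormedLattice

section QuotPosPartNorm

variable {X : Type*} [NormedAddCommGroup X] [Lattice X] [NormedSpace ℝ X]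

noncomputable def quotPosPartNorm (y z : X) : ℝ := ⨅ t : ℝ, ‖(z + t • y)⁺‖

theorem bddBelow_range_norm_posPart_add_smul (y z : X) :
    BddBelow (Set.range fun t : ℝ => ‖(z + t • y)⁺‖) :=
  ⟨0, by rintro _ ⟨t, rfl⟩; exact norm_nonneg _⟩

theorem quotPosPartNorm_nonneg (y z : X) : 0 ≤ quotPosPartNorm y z :=
  le_ciInf fun _ => norm_nonneg _

theorem quotPosPartNorm_le (y z : X) (t : ℝ) : quotPosPartNorm y z ≤ ‖(z + t • y)⁺‖ :=
  ciInf_le (bddBelow_range_norm_posPart_add_smul y z) t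

theorem quotPosPartNorm_le_norm_posPart (y z : X) : quotPosPartNorm y z ≤ ‖z⁺‖ := by
  simpa using quotPosPartNorm_le y z 0

theorem quotPosPartNorm_self (y : X) : quotPosPartNorm y y = 0 :=
  le_antisymm (by simpa using quotPosPartNorm_le y y (-1)) (quotPosPartNorm_nonneg y y)

theorem quotPosPartNorm_smul [PosSMulMono ℝ X] {c : ℝ} (hc : 0 < c) (y z : X) :
    quotPosPartNorm y (c • z) = c * quotPosPartNorm y z := by
  have hnorm (s : ℝ) : ‖(c • z + (c * s) • y)⁺‖ = c * ‖(z + s • y)⁺‖ := by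
    rw [mul_smul, ← smul_add, posPart_smul_of_nonneg hc.le, norm_smul, Real.norm_of_nonneg hc.le]
  calc quotPosPartNorm y (c • z) = ⨅ s : ℝ, ‖(c • z + (c * s) • y)⁺‖ :=
        ((Equiv.mulLeft₀ c hc.ne').iInf_comp (g := fun t => ‖(c • z + t • y)⁺‖)).symm
    _ = c * quotPosPartNorm y z := by
        simp only [hnorm, quotPosPartNorm, Real.mul_iInf_of_nonneg hc.le]

variable [IsOrderedAddMonoid X] [HasSolidNorm X]

theorem quotPosPartNorm_add_le (y z w : X) :
    quotPosPartNorm y (z + w) ≤ quotPosPartNorm y z + quotPosPartNorm y w := by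
  refine le_ciInf_add_ciInf fun t s => (quotPosPartNorm_le y _ (t + s)).trans ?_
  have hsplit : z + w + (t + s) • y = (z + t • y) + (w + s • y) := by
    rw [add_smul]; abel
  have hposPart : (z + w + (t + s) • y)⁺ ≤ (z + t • y)⁺ + (w + s • y)⁺ := by
    rw [posPart_def, hsplit]
    exact sup_le (add_le_add (le_posPart _) (le_posPart _))
      (add_nonneg (posPart_nonneg _) (posPart_nonneg _))
  calc ‖(z + w + (t + s) • y)⁺‖ ≤ ‖(z + t • y)⁺ + (w + s • y)⁺‖ :=
        norm_le_norm_of_nonneg_of_le (posPart_nonneg _) hposPart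
    _ ≤ ‖(z + t • y)⁺‖ + ‖(w + s • y)⁺‖ := norm_add_le _ _

theorem norm_le_quotPosPartNorm [PosSMulMono ℝ X] {x y : X} (hx : 0 ≤ x) (hy : 0 ≤ y)
    (hxy : x ⊓ y = 0) : ‖x‖ ≤ quotPosPartNorm y x :=
  le_ciInf fun t => norm_le_norm_of_nonneg_of_le hx (le_posPart_add_smul hx hy hxy t)

end QuotPosPartNorm

theorem exists_linearMap_apply_eq_le_sublinear {E : Type*} [AddCommGroup E] [Module ℝ E]
    (N : E → ℝ) (N_hom : ∀ c : ℝ, 0 < c → ∀ z, N (c • z) = c * N z)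
    (N_add : ∀ z w, N (z + w) ≤ N z + N w) (N_nonneg : ∀ z, 0 ≤ N z) {x : E} (hx : x ≠ 0)
    {a : ℝ} (ha : 0 ≤ a) (hax : a ≤ N x) : ∃ g : E →ₗ[ℝ] ℝ, g x = a ∧ ∀ z, g z ≤ N z := by
  let f : E →ₗ.[ℝ] ℝ := LinearPMap.mkSpanSingleton x a hx
  have hfN : ∀ z : f.domain, f z ≤ N z := by
    rintro ⟨z, hz⟩
    obtain ⟨c, rfl⟩ := Submodule.mem_span_singleton.mp hz
    rw [show f ⟨c • x, hz⟩ = c * a from LinearPMap.mkSpanSingleton'_apply x a _ c hz]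
    rcases le_or_gt c 0 with hc0 | hc0
    · exact (mul_nonpos_of_nonpos_of_nonneg hc0 ha).trans (N_nonneg _)
    · rw [N_hom c hc0]
      exact mul_le_mul_of_nonneg_left hax hc0.le
  obtain ⟨g, hgf, hgN⟩ := exists_extension_of_le_sublinear f N N_hom N_add hfN
  refine ⟨g, ?_, hgN⟩
  rw [hgf ⟨x, Submodule.mem_span_singleton_self x⟩]
  exact LinearPMap.mkSpanSingleton_apply ℝ ℝ hx a

theorem stmt2_general (X : Type*) [NormedAddCommGroup X] [Lattice X] [IsOrderedAddMonoid X]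
    [HasSolidNorm X] [NormedSpace ℝ X]
    [PosSMulStrictMono ℝ X]
    (x y : X) (hx0 : 0 ≤ x) (hy0 : 0 ≤ y) (hx : x ≠ 0) (hxy : x ⊓ y = 0) :
    ∃ f : X →L[ℝ] ℝ, (∀ z : X, 0 ≤ z → 0 ≤ f z) ∧ ‖f‖ = 1 ∧
      f x = ‖x‖ ∧ f y = 0 := by
  obtain ⟨g, hgx, hgq⟩ := exists_linearMap_apply_eq_le_sublinear (quotPosPartNorm y)
    (fun c hc z => quotPosPartNorm_smul hc y z) (quotPosPartNorm_add_le y)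
    (quotPosPartNorm_nonneg y) hx (norm_nonneg x) (norm_le_quotPosPartNorm hx0 hy0 hxy)
  have hg (z : X) : g z ≤ ‖z⁺‖ := (hgq z).trans (quotPosPartNorm_le_norm_posPart y z)
  have hbound := LinearMap.norm_apply_le_of_le_norm_posPart hg
  refine ⟨g.mkContinuous 1 hbound, fun z => LinearMap.nonneg_of_le_norm_posPart hg, ?_, hgx,
    le_antisymm ((hgq y).trans_eq (quotPosPartNorm_self y))
      (LinearMap.nonneg_of_le_norm_posPart hg hy0)⟩
  refine le_antisymm (g.mkContinuous_norm_le zero_le_one hbound) ?_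
  have hattained := (g.mkContinuous 1 hbound).le_opNorm x
  rw [LinearMap.mkContinuous_apply, hgx, Real.norm_of_nonneg (norm_nonneg x)] at hattained
  exact le_of_mul_le_mul_right (by simpa using hattained) (norm_pos_iff.mpr hx)

/-- If `x, y` are positive elements of a Banach lattice, `x ≠ 0` and
`x ⊓ y = 0`, then there is a norm-one positive functional `x*` with `x*(x) = ‖x‖` and
`x*(y) = 0`. -/
theorem stmt2 (X : Type*) [NormedAddCommGroup X] [Lattice X] [IsOrderedAddMonoid X]
    [HasSolidNorm X] [NormedSpace ℝ X]
    [PosSMulStrictMono ℝ X] [PosSMulReflectLT ℝ X] [CompleteSpace X]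
    (x y : X) (hx0 : 0 ≤ x) (hy0 : 0 ≤ y) (hx : x ≠ 0) (hxy : x ⊓ y = 0) :
    ∃ f : X →L[ℝ] ℝ, (∀ z : X, 0 ≤ z → 0 ≤ f z) ∧ ‖f‖ = 1 ∧
      f x = ‖x‖ ∧ f y = 0 :=
  stmt2_general X x y hx0 hy0 hx hxy
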